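/- (Complete-data corollary) If Y° ∈ ℂ^{N×L} has an atomic decomposition Y° = Σ_{j=1}^K c_j a(f_j) φ_j with K < (N + rank(Y°))/2, then this is the unique atomic decomposition achieving the atomic ℓ₀ norm, i.e., K = ‖Y°‖_{𝒜,0} and any other atomic decomposition of order at most K coincides with it. -/

import Mathlib

/-!
If `Y = ∑ c_k a(f_k) φ_kᵀ = ∑ c'_k a(f'_k) φ'_kᵀ`, the column space of `Y` lies in the span of
both sets of Fourier vectors, so the span of their union has dimension at most
`K + K' - rank Y < N`. As any `N` Fourier vectors with distinct frequencies in `[0, 1)` are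
independent (Vandermonde), the union has fewer than `N` frequencies and is independent.
Comparing coefficients column by column, both decompositions put the same total weight
`∑_{f_k = ω} c_k φ_k` on every frequency `ω`; with distinct frequencies, `c_k > 0` and unit
`φ_k` this weight determines the atoms.
-/

open Matrix

/-- The atom `a(f)φ ∈ ℂ^{N×L}`. -/
noncomputable def atom (N L : ℕ) (f : ℝ) (φ : Fin L → ℂ) : Matrix (Fin N) (Fin L) ℂ :=
  Matrix.of fun (i : Fin N) (l : Fin L) =>
    Complex.exp (2 * Real.pi * Complex.I * ((i : ℕ) : ℂ) * (f : ℂ)) * φ l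

/-- The atomic `ℓ₀` norm. -/
noncomputable def atomicL0 (N L : ℕ) (Y : Matrix (Fin N) (Fin L) ℂ) : ℕ :=
  sInf {K : ℕ | ∃ (c : Fin K → ℝ) (f : Fin K → ℝ) (φ : Fin K → Fin L → ℂ),
    (∀ k, 0 < c k) ∧ (∀ k, f k ∈ Set.Ico (0 : ℝ) 1) ∧
    (∀ k, ∑ l, ‖φ k l‖ ^ 2 = 1) ∧
    Y = ∑ k, (c k : ℂ) • atom N L (f k) (φ k)}

open Complex Finset Module Submodule

theorem linearIndependent_pow_of_card_le {R ι : Type*} [CommRing R] [IsDomain R] [Fintype ι]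
    {N : ℕ} {w : ι → R} (hw : Function.Injective w) (hcard : Fintype.card ι ≤ N) :
    LinearIndependent R (fun j (i : Fin N) => w j ^ (i : ℕ)) := by
  set e := Fintype.equivFin ι
  have hsquare : LinearIndependent R (vandermonde (w ∘ e.symm)) :=
    linearIndependent_rows_of_det_ne_zero
      (det_vandermonde_ne_zero_iff.mpr (hw.comp e.symm.injective))
  have hrect : LinearIndependent R (fun j (i : Fin N) => w (e.symm j) ^ (i : ℕ)) :=
    .of_comp (LinearMap.funLeft R R (Fin.castLE hcard)) hsquare
  exact (linearIndependent_equiv e.symm).mp hrect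

/-- Spark argument: `dim span (v '' (s ∪ t)) ≤ #s + #t - dim W < n`, so `s ∪ t` cannot contain
`n` independent vectors. -/
theorem linearIndepOn_union_of_le_span {K E ι : Type*} [Field K] [AddCommGroup E] [Module K E]
    [FiniteDimensional K E] [DecidableEq ι] {v : ι → E} {n : ℕ} {s t : Finset ι}
    {W : Submodule K E} (hv : ∀ u ⊆ s ∪ t, u.card ≤ n → LinearIndepOn K v ↑u)
    (hs : W ≤ span K (v '' s)) (ht : W ≤ span K (v '' t))
    (hcard : s.card + t.card < n + finrank K W) :
    LinearIndepOn K v ↑(s ∪ t) := by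
  classical
  refine hv _ subset_rfl (not_lt.mp fun hlt => ?_)
  obtain ⟨u, hu, rfl⟩ := exists_subset_card_eq hlt.le
  have hspan_le (r : Finset ι) : finrank K (span K (v '' r)) ≤ r.card := by
    rw [← coe_image]
    exact (finrank_span_finset_le_card _).trans card_image_le
  have hu_le : finrank K (span K (v '' u)) ≤ finrank K ↥(span K (v '' s) ⊔ span K (v '' t)) := by
    rw [← span_union, ← Set.image_union, ← coe_union]
    exact finrank_mono (span_mono (Set.image_mono hu))
  have hu_eq : finrank K (span K (v '' u)) = u.card := by
    rw [Set.image_eq_range, finrank_span_eq_card (hv u hu le_rfl)]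
    simp
  have hsup_inf := finrank_sup_add_finrank_inf_eq (span K (v '' s)) (span K (v '' t))
  have hW := finrank_mono (le_inf hs ht)
  have hs_card := hspan_le s
  have ht_card := hspan_le t
  omega

theorem LinearIndepOn.sum_filter_eq_of_sum_smul_eq {R M ι κ₁ κ₂ : Type*} [Semiring R]
    [AddCommMonoid M] [Module R M] [DecidableEq ι] [Fintype κ₁] [Fintype κ₂]
    {v : ι → M} {s : Set ι} (hv : LinearIndepOn R v s)
    {g₁ : κ₁ → ι} {g₂ : κ₂ → ι} (hg₁ : ∀ k, g₁ k ∈ s) (hg₂ : ∀ k, g₂ k ∈ s)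
    {a₁ : κ₁ → R} {a₂ : κ₂ → R} (h : ∑ k, a₁ k • v (g₁ k) = ∑ k, a₂ k • v (g₂ k)) (x : ι) :
    ∑ k with g₁ k = x, a₁ k = ∑ k with g₂ k = x, a₂ k := by
  have heq := linearIndepOn_iffₛ.mp hv
    (∑ k, Finsupp.single (g₁ k) (a₁ k))
    (Submodule.sum_mem _ fun k _ => Finsupp.single_mem_supported R _ (hg₁ k))
    (∑ k, Finsupp.single (g₂ k) (a₂ k))
    (Submodule.sum_mem _ fun k _ => Finsupp.single_mem_supported R _ (hg₂ k))
    (by simpa only [map_sum, Finsupp.linearCombination_single] using h)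
  simpa [Finsupp.finsetSum_apply, Finsupp.single_apply, sum_filter, eq_comm]
    using DFunLike.congr_fun heq x

theorem exp_two_pi_mul_I_injOn_Ico :
    Set.InjOn (fun x : ℝ => exp (2 * Real.pi * I * x)) (Set.Ico 0 1) := by
  intro x hx y hy hxy
  obtain ⟨n, hn⟩ := exp_eq_exp_iff_exists_int.mp hxy
  have hshift : x = y + n := by
    have h2πI : 2 * (Real.pi : ℂ) * I ≠ 0 := by simp [Real.pi_ne_zero, I_ne_zero]
    have : (x : ℂ) = y + n := mul_left_cancel₀ h2πI (by linear_combination hn)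
    exact_mod_cast this
  rw [← Int.fract_eq_self.mpr hx, ← Int.fract_eq_self.mpr hy, hshift, Int.fract_add_intCast]

/-- The vector `a(f)`. -/
noncomputable def fourierVec (N : ℕ) (f : ℝ) : Fin N → ℂ :=
  fun i => exp (2 * Real.pi * I * f) ^ (i : ℕ)

theorem atom_apply (N L : ℕ) (f : ℝ) (φ : Fin L → ℂ) (i : Fin N) (l : Fin L) :
    atom N L f φ i l = fourierVec N f i * φ l := by
  rw [atom, of_apply, fourierVec, ← exp_nat_mul]
  ring_nf

theorem linearIndepOn_fourierVec {N : ℕ} {u : Finset ℝ} (hu : ↑u ⊆ Set.Ico (0 : ℝ) 1)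
    (hcard : u.card ≤ N) : LinearIndepOn ℂ (fourierVec N) ↑u :=
  linearIndependent_pow_of_card_le
    (fun x y hxy => Subtype.ext (exp_two_pi_mul_I_injOn_Ico (hu x.2) (hu y.2) hxy))
    (by simpa using hcard)

noncomputable def atomicSum (N L : ℕ) {κ : Type*} [Fintype κ] (c : κ → ℝ) (f : κ → ℝ)
    (φ : κ → Fin L → ℂ) : Matrix (Fin N) (Fin L) ℂ :=
  ∑ k, (c k : ℂ) • atom N L (f k) (φ k)

section Decomposition

variable {N L : ℕ} {κ : Type*} [Fintype κ] (c : κ → ℝ) (f : κ → ℝ) (φ : κ → Fin L → ℂ)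

theorem atomicSum_col (l : Fin L) :
    (atomicSum N L c f φ).col l = ∑ k, ((c k : ℂ) * φ k l) • fourierVec N (f k) := by
  ext i
  simp only [col_apply, atomicSum, Matrix.sum_apply, Matrix.smul_apply, atom_apply,
    Finset.sum_apply, Pi.smul_apply, smul_eq_mul]
  exact sum_congr rfl fun k _ => by ring

theorem span_cols_atomicSum_le [DecidableEq κ] :
    span ℂ (Set.range (atomicSum N L c f φ).col) ≤
      span ℂ (fourierVec N '' ↑(univ.image f)) := by
  rw [span_le]
  rintro - ⟨l, rfl⟩
  rw [atomicSum_col]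
  exact sum_mem fun k _ => smul_mem _ _ (subset_span ⟨f k, by simp, rfl⟩)

noncomputable def freqCoeff (ω : ℝ) : Fin L → ℂ :=
  ∑ k with f k = ω, (c k : ℂ) • φ k

theorem freqCoeff_apply_self (hinj : Function.Injective f) (j : κ) :
    freqCoeff c f φ (f j) = (c j : ℂ) • φ j := by
  have hfiber : ({k | f k = f j} : Finset κ) = {j} := by
    ext k
    simp [hinj.eq_iff]
  rw [freqCoeff, hfiber, sum_singleton]

theorem exists_eq_of_freqCoeff_ne_zero {ω : ℝ} (h : freqCoeff c f φ ω ≠ 0) : ∃ k, f k = ω := by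
  obtain ⟨k, hk, -⟩ := exists_ne_zero_of_sum_ne_zero h
  exact ⟨k, (mem_filter.mp hk).2⟩

end Decomposition

theorem freqCoeff_eq_of_card_add_lt_rank {N L : ℕ} {κ₁ κ₂ : Type*} [Fintype κ₁] [Fintype κ₂]
    {c₁ f₁ : κ₁ → ℝ} {φ₁ : κ₁ → Fin L → ℂ} {c₂ f₂ : κ₂ → ℝ} {φ₂ : κ₂ → Fin L → ℂ}
    (hf₁ : ∀ k, f₁ k ∈ Set.Ico (0 : ℝ) 1) (hf₂ : ∀ k, f₂ k ∈ Set.Ico (0 : ℝ) 1)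
    (h : atomicSum N L c₁ f₁ φ₁ = atomicSum N L c₂ f₂ φ₂)
    (hcard : Fintype.card κ₁ + Fintype.card κ₂ < N + (atomicSum N L c₁ f₁ φ₁).rank) :
    freqCoeff c₁ f₁ φ₁ = freqCoeff c₂ f₂ φ₂ := by
  classical
  have hIco : ↑(univ.image f₁ ∪ univ.image f₂) ⊆ Set.Ico (0 : ℝ) 1 := by
    simp only [coe_union, coe_image, coe_univ, Set.image_univ]
    exact Set.union_subset (Set.range_subset_iff.mpr hf₁) (Set.range_subset_iff.mpr hf₂)
  have hindep : LinearIndepOn ℂ (fourierVec N) ↑(univ.image f₁ ∪ univ.image f₂) := by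
    refine linearIndepOn_union_of_le_span
      (fun u hu hcard => linearIndepOn_fourierVec ((coe_subset.mpr hu).trans hIco) hcard)
      (span_cols_atomicSum_le c₁ f₁ φ₁) (h ▸ span_cols_atomicSum_le c₂ f₂ φ₂) ?_
    calc (univ.image f₁).card + (univ.image f₂).card
        ≤ Fintype.card κ₁ + Fintype.card κ₂ := add_le_add card_image_le card_image_le
      _ < _ := hcard
      _ = _ := by rw [rank_eq_finrank_span_cols]
  ext ω l
  simp only [freqCoeff, Finset.sum_apply, Pi.smul_apply, smul_eq_mul]
  refine hindep.sum_filter_eq_of_sum_smul_eq (fun k => by simp) (fun k => by simp) ?_ ω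
  rw [← atomicSum_col, ← atomicSum_col, h]

theorem sum_norm_sq_ofReal_smul {L : ℕ} (c : ℝ) (φ : Fin L → ℂ) :
    ∑ l, ‖((c : ℂ) • φ) l‖ ^ 2 = c ^ 2 * ∑ l, ‖φ l‖ ^ 2 := by
  simp only [Pi.smul_apply, smul_eq_mul, norm_mul, mul_pow, norm_real, Real.norm_eq_abs, sq_abs,
    mul_sum]

section UnitNorm

variable {L : ℕ} {c c' : ℝ} {φ φ' : Fin L → ℂ}

theorem ofReal_smul_ne_zero (hc : 0 < c) (hφ : ∑ l, ‖φ l‖ ^ 2 = 1) : (c : ℂ) • φ ≠ 0 := by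
  intro h
  have hsq := sum_norm_sq_ofReal_smul c φ
  rw [h, hφ] at hsq
  simp only [Pi.zero_apply, norm_zero, ne_eq, OfNat.ofNat_ne_zero, not_false_eq_true,
    zero_pow, sum_const_zero, mul_one] at hsq
  exact (pow_pos hc 2).ne hsq

theorem eq_and_eq_of_ofReal_smul_eq (hc : 0 < c) (hc' : 0 < c') (hφ : ∑ l, ‖φ l‖ ^ 2 = 1)
    (hφ' : ∑ l, ‖φ' l‖ ^ 2 = 1) (h : (c : ℂ) • φ = (c' : ℂ) • φ') : c = c' ∧ φ = φ' := by
  have hsq : c ^ 2 = c' ^ 2 := by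
    have h₁ := sum_norm_sq_ofReal_smul c φ
    rw [h, sum_norm_sq_ofReal_smul, hφ, hφ'] at h₁
    linarith
  have hcc' : c = c' := (pow_left_inj₀ hc.le hc'.le two_ne_zero).mp hsq
  subst hcc'
  exact ⟨rfl, smul_right_injective _ (ofReal_ne_zero.mpr hc.ne') h⟩

end UnitNorm

section Uniqueness

variable {L : ℕ} {κ κ' : Type*} [Fintype κ] [Fintype κ']
  {c f : κ → ℝ} {φ : κ → Fin L → ℂ} {c' f' : κ' → ℝ} {φ' : κ' → Fin L → ℂ}

theorem range_subset_of_freqCoeff_eq (hc : ∀ k, 0 < c k) (hφ : ∀ k, ∑ l, ‖φ k l‖ ^ 2 = 1)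
    (hinj : Function.Injective f) (h : freqCoeff c f φ = freqCoeff c' f' φ') :
    Set.range f ⊆ Set.range f' := by
  rintro _ ⟨j, rfl⟩
  apply exists_eq_of_freqCoeff_ne_zero c' f' φ'
  rw [← h, freqCoeff_apply_self c f φ hinj]
  exact ofReal_smul_ne_zero (hc j) (hφ j)

theorem card_le_card_of_freqCoeff_eq (hc : ∀ k, 0 < c k) (hφ : ∀ k, ∑ l, ‖φ k l‖ ^ 2 = 1)
    (hinj : Function.Injective f) (h : freqCoeff c f φ = freqCoeff c' f' φ') :
    Fintype.card κ ≤ Fintype.card κ' := by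
  obtain ⟨g, hg⟩ := Set.range_subset_range_iff_exists_comp.mp
    (range_subset_of_freqCoeff_eq hc hφ hinj h)
  exact Fintype.card_le_of_injective g (hg ▸ hinj).of_comp

theorem exists_equiv_of_freqCoeff_eq (hc : ∀ k, 0 < c k) (hφ : ∀ k, ∑ l, ‖φ k l‖ ^ 2 = 1)
    (hinj : Function.Injective f) (hc' : ∀ k, 0 < c' k) (hφ' : ∀ k, ∑ l, ‖φ' k l‖ ^ 2 = 1)
    (hinj' : Function.Injective f') (h : freqCoeff c f φ = freqCoeff c' f' φ') :
    ∃ e : κ' ≃ κ, ∀ k, c' k = c (e k) ∧ f' k = f (e k) ∧ φ' k = φ (e k) := by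
  have hrange : Set.range f' = Set.range f :=
    (range_subset_of_freqCoeff_eq hc' hφ' hinj' h.symm).antisymm
      (range_subset_of_freqCoeff_eq hc hφ hinj h)
  let e : κ' ≃ κ := (Equiv.ofInjective f' hinj').trans
    ((Equiv.setCongr hrange).trans (Equiv.ofInjective f hinj).symm)
  have hfe (k : κ') : f (e k) = f' k := Equiv.apply_ofInjective_symm hinj _
  refine ⟨e, fun k => ?_⟩
  have hk := congrFun h (f' k)
  rw [freqCoeff_apply_self c' f' φ' hinj', ← hfe k, freqCoeff_apply_self c f φ hinj] at hk
  obtain ⟨hck, hφk⟩ := eq_and_eq_of_ofReal_smul_eq (hc' k) (hc (e k)) (hφ' k) (hφ (e k)) hk.symm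
  exact ⟨hck, (hfe k).symm, hφk⟩

end Uniqueness

/-- (Complete-data corollary) If `Y° ∈ ℂ^{N×L}` has an atomic decomposition of order `K`
with `2K < N + rank(Y°)`, then `K = ‖Y°‖_{𝒜,0}` and any other atomic decomposition of
order at most `K` coincides with it (up to permutation of the atoms). -/
theorem stmt12 (N L K : ℕ)
    (c : Fin K → ℝ) (f : Fin K → ℝ) (φ : Fin K → Fin L → ℂ)
    (hc : ∀ k, 0 < c k) (hf : ∀ k, f k ∈ Set.Ico (0 : ℝ) 1)
    (hinj : Function.Injective f) (hφ : ∀ k, ∑ l, ‖φ k l‖ ^ 2 = 1)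
    (Y₀ : Matrix (Fin N) (Fin L) ℂ)
    (hY₀ : Y₀ = ∑ k, (c k : ℂ) • atom N L (f k) (φ k))
    (hK : 2 * K < N + Y₀.rank) :
    atomicL0 N L Y₀ = K ∧
    (∀ (K' : ℕ), K' ≤ K →
      ∀ (c' : Fin K' → ℝ) (f' : Fin K' → ℝ) (φ' : Fin K' → Fin L → ℂ),
      (∀ k, 0 < c' k) → (∀ k, f' k ∈ Set.Ico (0 : ℝ) 1) → Function.Injective f' →
      (∀ k, ∑ l, ‖φ' k l‖ ^ 2 = 1) →
      Y₀ = ∑ k, (c' k : ℂ) • atom N L (f' k) (φ' k) →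
      ∃ e : Fin K' ≃ Fin K, ∀ k, c' k = c (e k) ∧ f' k = f (e k) ∧ φ' k = φ (e k)) := by
  have hY : Y₀ = atomicSum N L c f φ := hY₀
  have hcompare : ∀ {K'} {c' f' : Fin K' → ℝ} {φ' : Fin K' → Fin L → ℂ}, K' ≤ K →
      (∀ k, f' k ∈ Set.Ico (0 : ℝ) 1) → Y₀ = atomicSum N L c' f' φ' →
      freqCoeff c f φ = freqCoeff c' f' φ' := by
    intro K' c' f' φ' hK' hf' hY'
    refine freqCoeff_eq_of_card_add_lt_rank hf hf' (hY.symm.trans hY') ?_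
    rw [← hY, Fintype.card_fin, Fintype.card_fin]
    omega
  refine ⟨le_antisymm (Nat.sInf_le ⟨c, f, φ, hc, hf, hφ, hY₀⟩)
    (le_csInf ⟨K, c, f, φ, hc, hf, hφ, hY₀⟩ ?_), ?_⟩
  · rintro K'' ⟨c'', f'', φ'', -, hf'', -, hY''⟩
    by_contra! hlt
    have := card_le_card_of_freqCoeff_eq hc hφ hinj (hcompare hlt.le hf'' hY'')
    simp only [Fintype.card_fin] at this
    omega
  · intro K' hK' c' f' φ' hc' hf' hinj' hφ' hY'
    exact exists_equiv_of_freqCoeff_eq hc hφ hinj hc' hφ' hinj' (hcompare hK' hf' hY')
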